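/- Suppose in addition that w′(θ) = f(e^{iθ}) for all θ ∈ (0,2π), where f = p/q is a rational function (p, q polynomials with complex coefficients, q not identically zero) having no poles on the unit circle. Then there exist rational functions R_G, R_D, R_J such that R_G(z) = G_n(z), R_D(z) = D_n(z), and R_J(z) = J_n(z) for all z with |z| > 1, and each of R_G, R_D, R_J has no poles in ℂ other than possibly at 0 and at the poles of f lying in the open unit disk {z : |z| < 1}. -/

import Mathlib

/-!
Write `u = e^{iθ}`. On the unit circle `conj (P u) = P* u / u ^ deg P`, so each of the three
integrands is `A(u) / (u^N q(u))` for a polynomial `A`, and it suffices to show that the Cauchy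
transform `T(z) = ∫ R(e^{iθ}) / (z - e^{iθ}) dθ` of a rational function `R = A / B` without poles
on the circle is, for `|z| > 1`, rational with poles only at `0` and at the poles of `R` in the
disk. Factor `B = M N` with the roots of `M` inside and those of `N` outside the closed disk.
Since `z / (z - u) = 1 + u / (z - u)`, the product `M(z) T(z)` differs from the transform of
`M R = A / N` by a polynomial in `z`; and `A / N` is holomorphic on the closed disk, so by the
Cauchy integral formula its transform is `2π (A / N)(0) / z`.
-/

open Complex Polynomial MeasureTheory

/-- The reversed polynomial `p*(z) = z^{deg p}·conj(p(1/conj z))`. -/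
noncomputable def revPoly (p : Polynomial ℂ) : Polynomial ℂ :=
  (p.map (starRingEnd ℂ)).reverse

open scoped Real
open Set Metric

lemma Polynomial.exists_eq_mul_roots_mem_roots_notMem {K : Type*} [Field K] [IsAlgClosed K]
    {B : K[X]} (hB : B ≠ 0) (s : Set K) :
    ∃ M N : K[X], B = M * N ∧ (∀ a, M.eval a = 0 → a ∈ s) ∧ ∀ a, N.eval a = 0 → a ∉ s := by
  classical
  set M := ((B.roots.filter (· ∈ s)).map (X - C ·)).prod
  set N := ((B.roots.filter (· ∉ s)).map (X - C ·)).prod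
  have hlc : B.leadingCoeff ≠ 0 := leadingCoeff_ne_zero.mpr hB
  have mem_of_eval {t : Multiset K} {a : K} (ha : ((t.map (X - C ·)).prod).eval a = 0) :
      a ∈ t := by
    rwa [← roots_multiset_prod_X_sub_C t, mem_roots (monic_multiset_prod_of_monic _ _
      fun b _ => monic_X_sub_C b).ne_zero]
  refine ⟨M, C B.leadingCoeff * N, ?_, fun a ha => (Multiset.mem_filter.mp (mem_of_eval ha)).2,
    fun a ha => ?_⟩
  · conv_lhs =>
      rw [(IsAlgClosed.splits B).eq_prod_roots, ← Multiset.filter_add_not (· ∈ s) B.roots]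
    rw [Multiset.map_add, Multiset.prod_add]
    ring
  · rw [eval_mul, eval_C, mul_eq_zero] at ha
    exact (Multiset.mem_filter.mp (mem_of_eval (ha.resolve_left hlc))).2

noncomputable def circleCauchyTransform (h : ℝ → ℂ) (z : ℂ) : ℂ :=
  ∫ θ in (0:ℝ)..2 * π, h θ / (z - exp (θ * I))

section CircleCauchyTransform

variable {z : ℂ}

lemma sub_exp_mul_I_ne_zero (hz : 1 < ‖z‖) (θ : ℝ) : z - exp (θ * I) ≠ 0 := by
  rw [sub_ne_zero]
  rintro rfl
  simp [norm_exp_ofReal_mul_I] at hz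

lemma continuous_div_sub_exp_mul_I {h : ℝ → ℂ} (hh : Continuous h) (hz : 1 < ‖z‖) :
    Continuous fun θ : ℝ => h θ / (z - exp (θ * I)) :=
  hh.div (by fun_prop) (sub_exp_mul_I_ne_zero hz)

lemma circleCauchyTransform_add {h₁ h₂ : ℝ → ℂ} (hh₁ : Continuous h₁) (hh₂ : Continuous h₂)
    (hz : 1 < ‖z‖) :
    circleCauchyTransform (fun θ => h₁ θ + h₂ θ) z =
      circleCauchyTransform h₁ z + circleCauchyTransform h₂ z := by
  simp only [circleCauchyTransform, add_div]
  exact intervalIntegral.integral_add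
    ((continuous_div_sub_exp_mul_I hh₁ hz).intervalIntegrable _ _)
    ((continuous_div_sub_exp_mul_I hh₂ hz).intervalIntegrable _ _)

lemma circleCauchyTransform_const_mul (a : ℂ) (h : ℝ → ℂ) :
    circleCauchyTransform (fun θ => a * h θ) z = a * circleCauchyTransform h z := by
  simp only [circleCauchyTransform, mul_div_assoc, intervalIntegral.integral_const_mul]

lemma mul_circleCauchyTransform {h : ℝ → ℂ} (hh : Continuous h) (hz : 1 < ‖z‖) :
    z * circleCauchyTransform h z =
      (∫ θ in (0:ℝ)..2 * π, h θ) + circleCauchyTransform (fun θ => exp (θ * I) * h θ) z := by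
  have hcont : Continuous fun θ : ℝ => exp (θ * I) * h θ := by fun_prop
  rw [circleCauchyTransform, circleCauchyTransform, ← intervalIntegral.integral_const_mul,
    ← intervalIntegral.integral_add (hh.intervalIntegrable _ _)
      ((continuous_div_sub_exp_mul_I hcont hz).intervalIntegrable _ _)]
  refine intervalIntegral.integral_congr fun θ _ => ?_
  have := sub_exp_mul_I_ne_zero hz θ
  field_simp
  ring

lemma exists_eval_mul_circleCauchyTransform {h : ℝ → ℂ} (hh : Continuous h) (M : ℂ[X]) :
    ∃ P : ℂ[X], ∀ z : ℂ, 1 < ‖z‖ → M.eval z * circleCauchyTransform h z =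
      circleCauchyTransform (fun θ => M.eval (exp (θ * I)) * h θ) z + P.eval z := by
  have hcont (M : ℂ[X]) : Continuous fun θ : ℝ => M.eval (exp (θ * I)) * h θ := by fun_prop
  induction M using Polynomial.induction_on with
  | C a => exact ⟨0, fun z _ => by
      simp only [eval_C, eval_zero, add_zero, circleCauchyTransform_const_mul]⟩
  | add M N hM hN =>
    obtain ⟨P, hP⟩ := hM
    obtain ⟨Q, hQ⟩ := hN
    refine ⟨P + Q, fun z hz => ?_⟩
    simp only [eval_add, add_mul, circleCauchyTransform_add (hcont M) (hcont N) hz, hP z hz,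
      hQ z hz]
    ring
  | monomial k a hM =>
    obtain ⟨P, hP⟩ := hM
    refine ⟨C (∫ θ in (0:ℝ)..2 * π, (C a * X ^ k).eval (exp (θ * I)) * h θ) + X * P,
      fun z hz => ?_⟩
    have hX := mul_circleCauchyTransform (hcont (C a * X ^ k)) hz
    have hshift : (fun θ : ℝ => (C a * X ^ (k + 1)).eval (exp (θ * I)) * h θ) =
        fun θ : ℝ => exp (θ * I) * ((C a * X ^ k).eval (exp (θ * I)) * h θ) := by
      ext θ
      simp only [eval_mul, eval_C, eval_pow, eval_X]
      ring
    rw [hshift]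
    simp only [eval_add, eval_mul, eval_C, eval_pow, eval_X] at hP hX ⊢
    linear_combination z * hP z hz + hX

lemma circleCauchyTransform_eq_of_differentiableOn {g : ℂ → ℂ}
    (hg : DifferentiableOn ℂ g (closedBall 0 1)) (hz : 1 < ‖z‖) :
    circleCauchyTransform (fun θ => g (exp (θ * I))) z = 2 * π * g 0 / z := by
  have hz' : ∀ u ∈ closedBall (0 : ℂ) 1, z - u ≠ 0 := fun u hu => by
    rw [sub_ne_zero]
    rintro rfl
    exact (mem_closedBall_zero_iff.mp hu).not_gt hz
  have hcauchy := (hg.div ((differentiableOn_const z).sub differentiableOn_id) hz')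
    |>.circleIntegral_sub_inv_smul (mem_ball_self one_pos)
  simp only [circleIntegral, deriv_circleMap, circleMap_zero, ofReal_one, one_mul, sub_zero,
    smul_eq_mul, Pi.div_apply, Pi.sub_apply, id_eq] at hcauchy
  rw [intervalIntegral.integral_congr (g := fun θ : ℝ => I * (g (exp (θ * I)) / (z - exp (θ * I))))
    fun θ _ => by field_simp, intervalIntegral.integral_const_mul] at hcauchy
  refine mul_left_cancel₀ I_ne_zero ?_
  rw [circleCauchyTransform, hcauchy]
  ring

end CircleCauchyTransform

theorem exists_circleCauchyTransform_eq_div (A B : ℂ[X])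
    (hB : ∀ u : ℂ, ‖u‖ = 1 → B.eval u ≠ 0) :
    ∃ P Q : ℂ[X], Q ≠ 0 ∧ (∀ z : ℂ, Q.eval z = 0 → z = 0 ∨ (B.eval z = 0 ∧ ‖z‖ < 1)) ∧
      ∀ z : ℂ, 1 < ‖z‖ → circleCauchyTransform
        (fun θ => A.eval (exp (θ * I)) / B.eval (exp (θ * I))) z = P.eval z / Q.eval z := by
  have hB0 : B ≠ 0 := fun h => hB 1 norm_one (by simp [h])
  obtain ⟨M, N, rfl, hM, hN⟩ := exists_eq_mul_roots_mem_roots_notMem hB0 (ball (0 : ℂ) 1)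
  have hM_ne {u : ℂ} (hu : 1 ≤ ‖u‖) : M.eval u ≠ 0 := fun h =>
    (mem_ball_zero_iff.mp (hM u h)).not_ge hu
  have hN_ne : ∀ u ∈ closedBall (0 : ℂ) 1, N.eval u ≠ 0 := fun u hu h => by
    have hu1 : ‖u‖ = 1 := le_antisymm (mem_closedBall_zero_iff.mp hu)
      (not_lt.mp (mem_ball_zero_iff.not.mp (hN u h)))
    exact hB u hu1 (by rw [eval_mul, h, mul_zero])
  have hcont : Continuous fun θ : ℝ => A.eval (exp (θ * I)) / (M * N).eval (exp (θ * I)) :=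
    by fun_prop (disch := exact fun θ => hB _ (norm_exp_ofReal_mul_I θ))
  obtain ⟨P, hP⟩ := exists_eval_mul_circleCauchyTransform hcont M
  have hA_div_N : DifferentiableOn ℂ (fun u => A.eval u / N.eval u) (closedBall 0 1) :=
    A.differentiable.differentiableOn.div N.differentiable.differentiableOn hN_ne
  refine ⟨C (2 * π * (A.eval 0 / N.eval 0)) + X * P, X * M, mul_ne_zero X_ne_zero
    (left_ne_zero_of_mul hB0), fun z hz => ?_, fun z hz => ?_⟩
  · rw [eval_mul, eval_X, mul_eq_zero] at hz
    refine hz.imp id fun hz => ⟨by rw [eval_mul, hz, zero_mul], mem_ball_zero_iff.mp (hM z hz)⟩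
  · have hz0 : z ≠ 0 := norm_pos_iff.mp (one_pos.trans hz)
    have hMz := hM_ne hz.le
    have hsimp : (fun θ : ℝ => M.eval (exp (θ * I)) *
        (A.eval (exp (θ * I)) / (M * N).eval (exp (θ * I)))) =
        fun θ : ℝ => A.eval (exp (θ * I)) / N.eval (exp (θ * I)) := by
      ext θ
      have := hM_ne (norm_exp_ofReal_mul_I θ).ge
      rw [eval_mul]
      field_simp
    have key := hP z hz
    rw [hsimp, circleCauchyTransform_eq_of_differentiableOn hA_div_N hz] at key
    rw [eval_add, eval_mul, eval_mul, eval_C, eval_X, eq_div_iff (mul_ne_zero hz0 hMz),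
      mul_comm z, ← mul_assoc, mul_comm _ (M.eval z), key, add_mul, div_mul_cancel₀ _ hz0]
    ring

lemma conj_eval_eq_revPoly_eval_div {u : ℂ} (hu : ‖u‖ = 1) (P : ℂ[X]) :
    starRingEnd ℂ (P.eval u) = (revPoly P).eval u / u ^ P.natDegree := by
  have hu0 : u ≠ 0 := norm_ne_zero_iff.mp (by rw [hu]; exact one_ne_zero)
  let := invertibleOfNonzero (inv_ne_zero hu0)
  have := eval₂_reverse_mul_pow (RingHom.id ℂ) u⁻¹ (P.map (starRingEnd ℂ))
  rw [invOf_eq_inv, inv_inv, natDegree_map, inv_pow, ← div_eq_mul_inv] at this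
  change eval u _ / _ = eval u⁻¹ _ at this
  rw [revPoly, this, Complex.inv_eq_conj hu, eval_map_apply]

lemma norm_sq_eval_mul_div_eq {u : ℂ} (hu : ‖u‖ = 1) (P p q : ℂ[X]) :
    ((‖P.eval u‖ ^ 2 : ℝ) : ℂ) * (p.eval u / q.eval u) =
      (P * revPoly P * p).eval u / (X ^ P.natDegree * q).eval u := by
  rw [ofReal_pow, ← mul_conj', conj_eval_eq_revPoly_eval_div hu]
  simp only [eval_mul, eval_pow, eval_X]
  ring

lemma exp_neg_natCast_mul_mul_I (n : ℕ) (θ : ℝ) :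
    exp (-(n : ℂ) * θ * I) = (exp (θ * I) ^ n)⁻¹ := by
  rw [← exp_nat_mul, ← exp_neg]
  ring_nf

lemma exp_neg_natCast_sub_two_mul_mul_I (n : ℕ) (θ : ℝ) :
    exp (-((n : ℂ) - 2) * θ * I) = exp (θ * I) ^ 2 * (exp (θ * I) ^ n)⁻¹ := by
  rw [← exp_neg_natCast_mul_mul_I, ← exp_nat_mul, ← exp_add]
  ring_nf

lemma exists_eval_div_eq_mul_integral {q : ℂ[X]} (hq : ∀ u : ℂ, ‖u‖ = 1 → q.eval u ≠ 0)
    (A c : ℂ[X]) (N : ℕ) {F : ℂ → ℂ} {f : ℝ → ℂ}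
    (hF : ∀ z : ℂ, 1 < ‖z‖ → F z = c.eval z * ∫ θ in (0:ℝ)..2 * π, f θ / (z - exp (θ * I)))
    (hf : ∀ θ ∈ Ioo 0 (2 * π), f θ = A.eval (exp (θ * I)) / (X ^ N * q).eval (exp (θ * I))) :
    ∃ P Q : ℂ[X], Q ≠ 0 ∧ (∀ z : ℂ, 1 < ‖z‖ → P.eval z / Q.eval z = F z) ∧
      ∀ z : ℂ, Q.eval z = 0 → z = 0 ∨ (q.eval z = 0 ∧ ‖z‖ < 1) := by
  have hB (u : ℂ) (hu : ‖u‖ = 1) : (X ^ N * q).eval u ≠ 0 := by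
    simp only [eval_mul, eval_pow, eval_X]
    exact mul_ne_zero (pow_ne_zero _ (norm_ne_zero_iff.mp (by simp [hu]))) (hq u hu)
  obtain ⟨P, Q, hQ, hQroots, hPQ⟩ := exists_circleCauchyTransform_eq_div A _ hB
  refine ⟨c * P, Q, hQ, fun z hz => ?_, fun z hz => ?_⟩
  · have hcongr : ∫ θ in (0:ℝ)..2 * π, f θ / (z - exp (θ * I)) = circleCauchyTransform
        (fun θ => A.eval (exp (θ * I)) / (X ^ N * q).eval (exp (θ * I))) z :=
      intervalIntegral.integral_congr_Ioo_of_le Real.two_pi_pos.le fun θ hθ => by rw [hf θ hθ]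
    rw [hF z hz, hcongr, hPQ z hz, eval_mul, mul_div_assoc]
  · rcases hQroots z hz with hz0 | ⟨hz, hz1⟩
    · exact Or.inl hz0
    · rw [eval_mul, eval_pow, eval_X, mul_eq_zero] at hz
      exact hz.imp eq_zero_of_pow_eq_zero fun hqz => ⟨hqz, hz1⟩

theorem stmt_5_general
    (n : ℕ)
    (w : ℝ → ℝ)
    (φ : ℕ → Polynomial ℂ)
    (G D J : ℂ → ℂ)
    (hG : ∀ z : ℂ, 1 < ‖z‖ → G z =
      Complex.I * (2 * Real.pi : ℂ)⁻¹ * ∫ θ in (0:ℝ)..(2 * Real.pi),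
        (((‖(revPoly (φ (n - 1))).eval (Complex.exp (θ * Complex.I))‖) ^ 2
            * deriv w θ : ℝ) : ℂ) / (z - Complex.exp (θ * Complex.I)))
    (hD : ∀ z : ℂ, 1 < ‖z‖ → D z =
      -Complex.I * z * (2 * Real.pi : ℂ)⁻¹ * ∫ θ in (0:ℝ)..(2 * Real.pi),
        ((revPoly (φ (n - 1))).eval (Complex.exp (θ * Complex.I))) ^ 2
          * ((deriv w θ : ℝ) : ℂ) * Complex.exp (-(n : ℂ) * θ * Complex.I)
          / (z - Complex.exp (θ * Complex.I)))
    (hJ : ∀ z : ℂ, 1 < ‖z‖ → J z =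
      Complex.I * (2 * Real.pi : ℂ)⁻¹ * ∫ θ in (0:ℝ)..(2 * Real.pi),
        ((φ (n - 1)).eval (Complex.exp (θ * Complex.I))) ^ 2
          * ((deriv w θ : ℝ) : ℂ) * Complex.exp (-((n : ℂ) - 2) * θ * Complex.I)
          / (z - Complex.exp (θ * Complex.I)))
    -- `w′(θ) = f(e^{iθ})` with `f = p/q` rational, in lowest terms, no poles on `∂𝔻`
    (p q : Polynomial ℂ)
    (hqcirc : ∀ z : ℂ, ‖z‖ = 1 → q.eval z ≠ 0)
    (hwf : ∀ θ ∈ Set.Ioo (0:ℝ) (2 * Real.pi),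
      ((deriv w θ : ℝ) : ℂ)
        = p.eval (Complex.exp (θ * Complex.I)) / q.eval (Complex.exp (θ * Complex.I))) :
    ∃ pG qG pD qD pJ qJ : Polynomial ℂ,
      qG ≠ 0 ∧ qD ≠ 0 ∧ qJ ≠ 0 ∧
      (∀ z : ℂ, 1 < ‖z‖ → pG.eval z / qG.eval z = G z) ∧
      (∀ z : ℂ, 1 < ‖z‖ → pD.eval z / qD.eval z = D z) ∧
      (∀ z : ℂ, 1 < ‖z‖ → pJ.eval z / qJ.eval z = J z) ∧
      (∀ z : ℂ, qG.eval z = 0 → z = 0 ∨ (q.eval z = 0 ∧ ‖z‖ < 1)) ∧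
      (∀ z : ℂ, qD.eval z = 0 → z = 0 ∨ (q.eval z = 0 ∧ ‖z‖ < 1)) ∧
      (∀ z : ℂ, qJ.eval z = 0 → z = 0 ∨ (q.eval z = 0 ∧ ‖z‖ < 1)) := by
  set r := revPoly (φ (n - 1))
  obtain ⟨pG, qG, hqG, hpqG, hqG_roots⟩ := exists_eval_div_eq_mul_integral (F := G) hqcirc
    (r * revPoly r * p) (C (I * (2 * π : ℂ)⁻¹)) r.natDegree (fun z hz => by rw [hG z hz, eval_C])
    fun θ hθ => by rw [ofReal_mul, hwf θ hθ, norm_sq_eval_mul_div_eq (norm_exp_ofReal_mul_I θ)]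
  obtain ⟨pD, qD, hqD, hpqD, hqD_roots⟩ := exists_eval_div_eq_mul_integral (F := D) hqcirc
    (r ^ 2 * p) (C (-I * (2 * π : ℂ)⁻¹) * X) n
    (fun z hz => by rw [hD z hz, eval_mul, eval_C, eval_X]; ring)
    fun θ hθ => by
      rw [hwf θ hθ, exp_neg_natCast_mul_mul_I]
      simp only [eval_mul, eval_pow, eval_X]
      ring
  obtain ⟨pJ, qJ, hqJ, hpqJ, hqJ_roots⟩ := exists_eval_div_eq_mul_integral (F := J) hqcirc
    (φ (n - 1) ^ 2 * p * X ^ 2) (C (I * (2 * π : ℂ)⁻¹)) n (fun z hz => by rw [hJ z hz, eval_C])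
    fun θ hθ => by
      rw [hwf θ hθ, exp_neg_natCast_sub_two_mul_mul_I]
      simp only [eval_mul, eval_pow, eval_X]
      ring
  exact ⟨pG, qG, pD, qD, pJ, qJ, hqG, hqD, hqJ, hpqG, hpqD, hpqJ, hqG_roots, hqD_roots, hqJ_roots⟩

/-- **Proposition (meromorphic continuation of `G_n`, `D_n`, `J_n`).**
If `w′(θ) = f(e^{iθ})` with `f = p/q` a rational function (in lowest terms) without poles
on the unit circle, then `G_n`, `D_n`, `J_n` extend to all of `ℂ` as rational functions
with no poles except possibly at `0` and at the poles of `f` in the open unit disk. -/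
theorem stmt_5
    (n : ℕ) (hn : 1 ≤ n)
    (w : ℝ → ℝ)
    (hwper : Function.Periodic w (2 * Real.pi))
    (hwpos : ∀ θ, 0 ≤ w θ)
    (hwcont : Continuous w)
    (hwdiff : ∀ θ ∈ Set.Ioo (0:ℝ) (2 * Real.pi), DifferentiableAt ℝ w θ)
    (hwint : IntegrableOn (deriv w) (Set.Ioo (0:ℝ) (2 * Real.pi)))
    (hwprob : (2 * Real.pi)⁻¹ * (∫ θ in (0:ℝ)..(2 * Real.pi), w θ) = 1)
    (hsupp : {θ ∈ Set.Ico (0:ℝ) (2 * Real.pi) | 0 < w θ}.Infinite)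
    (φ : ℕ → Polynomial ℂ) (κ : ℕ → ℝ)
    (hκ : ∀ k ≤ n, 0 < κ k)
    (hdeg : ∀ k ≤ n, (φ k).natDegree = k)
    (hlead : ∀ k ≤ n, (φ k).leadingCoeff = (κ k : ℂ))
    (horth : ∀ j ≤ n, ∀ k ≤ n,
      (2 * Real.pi : ℂ)⁻¹ * ∫ θ in (0:ℝ)..(2 * Real.pi),
          (φ j).eval (Complex.exp (θ * Complex.I))
            * (starRingEnd ℂ) ((φ k).eval (Complex.exp (θ * Complex.I))) * (w θ : ℂ)
        = if j = k then 1 else 0)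
    (G D J : ℂ → ℂ)
    (hG : ∀ z : ℂ, 1 < ‖z‖ → G z =
      Complex.I * (2 * Real.pi : ℂ)⁻¹ * ∫ θ in (0:ℝ)..(2 * Real.pi),
        (((‖(revPoly (φ (n - 1))).eval (Complex.exp (θ * Complex.I))‖) ^ 2
            * deriv w θ : ℝ) : ℂ) / (z - Complex.exp (θ * Complex.I)))
    (hD : ∀ z : ℂ, 1 < ‖z‖ → D z =
      -Complex.I * z * (2 * Real.pi : ℂ)⁻¹ * ∫ θ in (0:ℝ)..(2 * Real.pi),
        ((revPoly (φ (n - 1))).eval (Complex.exp (θ * Complex.I))) ^ 2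
          * ((deriv w θ : ℝ) : ℂ) * Complex.exp (-(n : ℂ) * θ * Complex.I)
          / (z - Complex.exp (θ * Complex.I)))
    (hJ : ∀ z : ℂ, 1 < ‖z‖ → J z =
      Complex.I * (2 * Real.pi : ℂ)⁻¹ * ∫ θ in (0:ℝ)..(2 * Real.pi),
        ((φ (n - 1)).eval (Complex.exp (θ * Complex.I))) ^ 2
          * ((deriv w θ : ℝ) : ℂ) * Complex.exp (-((n : ℂ) - 2) * θ * Complex.I)
          / (z - Complex.exp (θ * Complex.I)))
    -- `w′(θ) = f(e^{iθ})` with `f = p/q` rational, in lowest terms, no poles on `∂𝔻`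
    (p q : Polynomial ℂ) (hq : q ≠ 0) (hpq : IsCoprime p q)
    (hqcirc : ∀ z : ℂ, ‖z‖ = 1 → q.eval z ≠ 0)
    (hwf : ∀ θ ∈ Set.Ioo (0:ℝ) (2 * Real.pi),
      ((deriv w θ : ℝ) : ℂ)
        = p.eval (Complex.exp (θ * Complex.I)) / q.eval (Complex.exp (θ * Complex.I))) :
    ∃ pG qG pD qD pJ qJ : Polynomial ℂ,
      qG ≠ 0 ∧ qD ≠ 0 ∧ qJ ≠ 0 ∧
      (∀ z : ℂ, 1 < ‖z‖ → pG.eval z / qG.eval z = G z) ∧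
      (∀ z : ℂ, 1 < ‖z‖ → pD.eval z / qD.eval z = D z) ∧
      (∀ z : ℂ, 1 < ‖z‖ → pJ.eval z / qJ.eval z = J z) ∧
      (∀ z : ℂ, qG.eval z = 0 → z = 0 ∨ (q.eval z = 0 ∧ ‖z‖ < 1)) ∧
      (∀ z : ℂ, qD.eval z = 0 → z = 0 ∨ (q.eval z = 0 ∧ ‖z‖ < 1)) ∧
      (∀ z : ℂ, qJ.eval z = 0 → z = 0 ∨ (q.eval z = 0 ∧ ‖z‖ < 1)) :=
  stmt_5_general n w φ G D J hG hD hJ p q hqcirc hwf
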